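/- Let I, J ⊆ ℝ be open intervals, D = I × J, f : I → ℝ, g : J → ℝ smooth with f + g nowhere zero, H = 1/(f + g), and let ω, Q, R : D → ℝ be smooth satisfying the Gauss equation (G₀) and the Codazzi equations (C₀) with mean curvature H. Fix τ ∈ ℝ, τ ≠ 0, and set λ(u,v) = (1 − 2iτ g(v))/(1 + 2iτ f(u)) (1 + 2iτf ≠ 0 automatically). Let Ψ : D → SL₂(ℂ) be smooth with ∂_u Ψ = Ψ U_λ, ∂_v Ψ = Ψ V_λ, where U_λ = [[−ω_u/4, −Q e^{−ω/2}], [(H/2) λ e^{ω/2}, ω_u/4]] and V_λ = [[ω_v/4, −(H/2) λ^{−1} e^{ω/2}], [R e^{−ω/2}, −ω_v/4]]. Define F = Ψ i′ Ψ* and N = −Ψ j′ Ψ*, where i′ = [[0, −i],[i, 0]], j′ = [[0,1],[1,0]], and Ψ* is the conjugate transpose. Then F and N take values in the Hermitian 2×2 matrices, det F = −1, and with the scalar product ⟨X,Y⟩ = −(1/2)tr(i′ X i′ Yᵀ) on Hermitian matrices: ⟨∂_u F, ∂_u F⟩ = ⟨∂_v F, ∂_v F⟩ = 0; 2⟨∂_u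 F, ∂_v F⟩ = 4τ² e^ω/((1 + 4τ²f²)(1 + 4τ²g²)); ⟨N,N⟩ = 1; and ⟨N, F⟩ = ⟨N, ∂_u F⟩ = ⟨N, ∂_v F⟩ = 0. -/

import Mathlib

open Matrix

noncomputable section

/-- Partial derivative in the first variable. -/
def pd1 (f : ℝ → ℝ → ℝ) (u v : ℝ) : ℝ := deriv (fun x => f x v) u

/-- Partial derivative in the second variable. -/
def pd2 (f : ℝ → ℝ → ℝ) (u v : ℝ) : ℝ := deriv (fun y => f u y) v

/-- The Gauss equation (G_c) at a point. -/
def GaussEq (c : ℝ) (ω Q R H : ℝ → ℝ → ℝ) (u v : ℝ) : Prop :=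
  pd2 (pd1 ω) u v + (1 / 2) * ((H u v) ^ 2 + c) * Real.exp (ω u v)
    - 2 * Q u v * R u v * Real.exp (-ω u v) = 0

/-- The Codazzi equations (C_c) at a point. -/
def CodazziEq (ω Q R H : ℝ → ℝ → ℝ) (u v : ℝ) : Prop :=
  pd1 H u v = 2 * Real.exp (-ω u v) * pd2 Q u v ∧
  pd2 H u v = 2 * Real.exp (-ω u v) * pd1 R u v

/-- Smoothness of a two-variable function on a set. -/
def Smooth2 (f : ℝ → ℝ → ℝ) (s : Set (ℝ × ℝ)) : Prop :=
  ContDiffOn ℝ (⊤ : ℕ∞) (fun p : ℝ × ℝ => f p.1 p.2) s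

/-- Entrywise derivative of a complex-matrix-valued function of a real variable. -/
def mderiv (f : ℝ → Matrix (Fin 2) (Fin 2) ℂ) (x : ℝ) : Matrix (Fin 2) (Fin 2) ℂ :=
  Matrix.of fun i j => deriv (fun t => f t i j) x

/-- The matrix `U_λ` of the complexified Lax pair. -/
def UmatC (ω Q H : ℝ → ℝ → ℝ) (lam : ℝ → ℝ → ℂ) (u v : ℝ) : Matrix (Fin 2) (Fin 2) ℂ :=
  !![(↑(-(pd1 ω u v) / 4) : ℂ), (↑(-(Q u v) * Real.exp (-(ω u v) / 2)) : ℂ);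
     (↑(H u v / 2) : ℂ) * lam u v * (↑(Real.exp (ω u v / 2)) : ℂ), (↑((pd1 ω u v) / 4) : ℂ)]

/-- The matrix `V_λ` of the complexified Lax pair. -/
def VmatC (ω R H : ℝ → ℝ → ℝ) (lam : ℝ → ℝ → ℂ) (u v : ℝ) : Matrix (Fin 2) (Fin 2) ℂ :=
  !![(↑((pd2 ω u v) / 4) : ℂ), -(↑(H u v / 2) : ℂ) * (lam u v)⁻¹ * (↑(Real.exp (ω u v / 2)) : ℂ);
     (↑(R u v * Real.exp (-(ω u v) / 2)) : ℂ), (↑(-(pd2 ω u v) / 4) : ℂ)]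

/-- The matrix `i′`. -/
def imat : Matrix (Fin 2) (Fin 2) ℂ := !![0, -Complex.I; Complex.I, 0]

/-- The matrix `j′`. -/
def jmat : Matrix (Fin 2) (Fin 2) ℂ := !![0, 1; 1, 0]

/-- The scalar product `⟨X,Y⟩ = −(1/2)tr(i′Xi′Yᵀ)` on Hermitian matrices
(the metric of `E⁴₁ = ℍ`). -/
def formH (X Y : Matrix (Fin 2) (Fin 2) ℂ) : ℂ :=
  -(1 / 2 : ℂ) * (imat * X * imat * Yᵀ).trace

/-!
Writing `Ψ_u = ΨU`, `Ψ_v = ΨV`, the product rule gives `F_u = Ψ(Ui′ + i′U*)Ψ*`,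
`F_v = Ψ(Vi′ + i′V*)Ψ*` and `N = Ψ(−j′)Ψ*`. The form `⟨X,Y⟩` is the polarization of `−det`, so
`X ↦ PXP*` multiplies it by `|det P|²` and, as `det Ψ = 1`, all inner products may be computed
with `Ψ` removed. Since the diagonal of `U` is real and trace-free and its upper-right entry is
real, `Ui′ + i′U* = diag(0, He^{ω/2} Im λ)`; likewise `Vi′ + i′V* = diag(He^{ω/2} Im λ⁻¹, 0)`.
Both are null and orthogonal to `j′` and `i′`, and `2⟨F_u,F_v⟩ = −H²e^ω Im λ Im λ⁻¹`, which
`H(f + g) = 1` turns into the conformal factor.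
-/

lemma formH_apply (X Y : Matrix (Fin 2) (Fin 2) ℂ) :
    formH X Y = -(1 / 2) * (X 0 0 * Y 1 1 + X 1 1 * Y 0 0 - X 0 1 * Y 1 0 - X 1 0 * Y 0 1) := by
  simp only [formH, imat, trace_fin_two, mul_apply, transpose_apply, Fin.sum_univ_two]
  simp
  linear_combination
    (X 1 0 * Y 0 1 + X 0 1 * Y 1 0 - X 1 1 * Y 0 0 - X 0 0 * Y 1 1) * Complex.I_sq

lemma formH_mul_mul_conjTranspose (P A B : Matrix (Fin 2) (Fin 2) ℂ) :
    formH (P * A * Pᴴ) (P * B * Pᴴ) = P.det * star P.det * formH A B := by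
  simp only [formH_apply, det_fin_two, mul_apply, conjTranspose_apply, Fin.sum_univ_two, star_sub,
    star_mul']
  ring

lemma formH_mul_mul_conjTranspose_of_det_eq_one {P : Matrix (Fin 2) (Fin 2) ℂ} (hP : P.det = 1)
    (A B : Matrix (Fin 2) (Fin 2) ℂ) : formH (P * A * Pᴴ) (P * B * Pᴴ) = formH A B := by
  simp [formH_mul_mul_conjTranspose, hP]

lemma imat_isHermitian : imat.IsHermitian := by
  ext i j; fin_cases i <;> fin_cases j <;> simp [imat]

lemma jmat_isHermitian : jmat.IsHermitian := by
  ext i j; fin_cases i <;> fin_cases j <;> simp [jmat]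

lemma mul_imat_add_imat_mul_conjTranspose {X : Matrix (Fin 2) (Fin 2) ℂ}
    (hX : X 1 1 = -star (X 0 0)) :
    X * imat + imat * Xᴴ = !![((-2 * (X 0 1).im : ℝ) : ℂ), 0; 0, ((2 * (X 1 0).im : ℝ) : ℂ)] := by
  ext i j
  fin_cases i <;> fin_cases j <;>
    simp only [Matrix.add_apply, mul_apply, Fin.sum_univ_two, conjTranspose_apply] <;>
    simp [imat, hX, Complex.ext_iff] <;> ring

lemma mderiv_mul_mul_conjTranspose {Φ : ℝ → Matrix (Fin 2) (Fin 2) ℂ} {u : ℝ}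
    (hΦ : ∀ i j, DifferentiableAt ℝ (fun t => Φ t i j) u) (C : Matrix (Fin 2) (Fin 2) ℂ) :
    mderiv (fun t => Φ t * C * (Φ t)ᴴ) u
      = mderiv Φ u * C * (Φ u)ᴴ + Φ u * C * (mderiv Φ u)ᴴ := by
  ext i j
  have hd : ∀ k l, HasDerivAt (fun t => Φ t k l) (mderiv Φ u k l) u :=
    fun k l => (hΦ k l).hasDerivAt
  have hsum := HasDerivAt.fun_sum (u := Finset.univ) fun k _ =>
    (HasDerivAt.fun_sum (u := Finset.univ) fun l _ => (hd i l).mul_const (C l k)).fun_mul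
      (hd j k).star
  simp only [mderiv, of_apply, mul_apply, conjTranspose_apply, Matrix.add_apply] at hsum ⊢
  rw [hsum.deriv, ← Finset.sum_add_distrib]

lemma mderiv_mul_mul_conjTranspose_of_lax {Φ : ℝ → Matrix (Fin 2) (Fin 2) ℂ} {u : ℝ}
    (hΦ : ∀ i j, DifferentiableAt ℝ (fun t => Φ t i j) u) {X : Matrix (Fin 2) (Fin 2) ℂ}
    (hlax : mderiv Φ u = Φ u * X) (C : Matrix (Fin 2) (Fin 2) ℂ) :
    mderiv (fun t => Φ t * C * (Φ t)ᴴ) u = Φ u * (X * C + C * Xᴴ) * (Φ u)ᴴ := by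
  rw [mderiv_mul_mul_conjTranspose hΦ, hlax, conjTranspose_mul]
  noncomm_ring

section Partial

variable {𝕜 E : Type*} [NontriviallyNormedField 𝕜] [NormedAddCommGroup E] [NormedSpace 𝕜 E]
  {φ : 𝕜 × 𝕜 → E} {u v : 𝕜}

lemma DifferentiableAt.comp_prodMk_const_right (h : DifferentiableAt 𝕜 φ (u, v)) :
    DifferentiableAt 𝕜 (fun t => φ (t, v)) u :=
  h.comp u (differentiableAt_id.prodMk (differentiableAt_const v))

lemma DifferentiableAt.comp_prodMk_const_left (h : DifferentiableAt 𝕜 φ (u, v)) :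
    DifferentiableAt 𝕜 (fun t => φ (u, t)) v :=
  h.comp v ((differentiableAt_const u).prodMk differentiableAt_id)

end Partial

section LaxPair

variable (ω Q R H : ℝ → ℝ → ℝ) (lam : ℝ → ℝ → ℂ) (u v : ℝ)

lemma UmatC_mul_imat_add_imat_mul_conjTranspose :
    UmatC ω Q H lam u v * imat + imat * (UmatC ω Q H lam u v)ᴴ
      = !![0, 0; 0, ((H u v * Real.exp (ω u v / 2) * (lam u v).im : ℝ) : ℂ)] := by
  rw [mul_imat_add_imat_mul_conjTranspose (by simp [UmatC]; ring)]
  simp [UmatC, -Complex.ofReal_exp]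
  ring

lemma VmatC_mul_imat_add_imat_mul_conjTranspose :
    VmatC ω R H lam u v * imat + imat * (VmatC ω R H lam u v)ᴴ
      = !![((H u v * Real.exp (ω u v / 2) * (lam u v)⁻¹.im : ℝ) : ℂ), 0; 0, 0] := by
  rw [mul_imat_add_imat_mul_conjTranspose (by simp [VmatC]; ring)]
  simp [VmatC, -Complex.ofReal_exp]
  ring

end LaxPair

lemma im_div_one_add_mul_I (τ a b : ℝ) :
    ((1 - 2 * (τ : ℂ) * (b : ℂ) * Complex.I) / (1 + 2 * (τ : ℂ) * (a : ℂ) * Complex.I)).im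
      = -2 * τ * (a + b) / (1 + 4 * τ ^ 2 * a ^ 2) := by
  rw [Complex.div_im]
  simp [Complex.normSq_apply]
  field_simp
  ring

lemma im_inv_div_one_add_mul_I (τ a b : ℝ) :
    ((1 - 2 * (τ : ℂ) * (b : ℂ) * Complex.I) / (1 + 2 * (τ : ℂ) * (a : ℂ) * Complex.I))⁻¹.im
      = 2 * τ * (a + b) / (1 + 4 * τ ^ 2 * b ^ 2) := by
  rw [inv_div, Complex.div_im]
  simp [Complex.normSq_apply]
  field_simp
  ring

lemma two_mul_formH_diagonal_eq {τ a b : ℝ} (hab : a + b ≠ 0) {l : ℂ}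
    (hl : l = (1 - 2 * (τ : ℂ) * (b : ℂ) * Complex.I) / (1 + 2 * (τ : ℂ) * (a : ℂ) * Complex.I))
    (w : ℝ) :
    2 * formH !![0, 0; 0, ((1 / (a + b) * Real.exp (w / 2) * l.im : ℝ) : ℂ)]
        !![((1 / (a + b) * Real.exp (w / 2) * l⁻¹.im : ℝ) : ℂ), 0; 0, 0]
      = ((4 * τ ^ 2 * Real.exp w / ((1 + 4 * τ ^ 2 * a ^ 2) * (1 + 4 * τ ^ 2 * b ^ 2)) : ℝ) :
          ℂ) := by
  have hexp : Real.exp w = Real.exp (w / 2) ^ 2 := by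
    rw [← Real.exp_nat_mul]
    ring_nf
  have hreal :
      -((1 / (a + b) * Real.exp (w / 2) * l.im) * (1 / (a + b) * Real.exp (w / 2) * l⁻¹.im))
        = 4 * τ ^ 2 * Real.exp w / ((1 + 4 * τ ^ 2 * a ^ 2) * (1 + 4 * τ ^ 2 * b ^ 2)) := by
    rw [hl, im_div_one_add_mul_I, im_inv_div_one_add_mul_I, hexp]
    field_simp
    ring
  rw [← hreal, formH_apply]
  simp

theorem statement4_general
    (I J : Set ℝ)
    (hIopen : IsOpen I)
    (hJopen : IsOpen J)
    (f g : ℝ → ℝ)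
    (hfg : ∀ u ∈ I, ∀ v ∈ J, f u + g v ≠ 0)
    (τ : ℝ)
    (H : ℝ → ℝ → ℝ) (hH : ∀ u v, H u v = 1 / (f u + g v))
    (lam : ℝ → ℝ → ℂ)
    (hlam : ∀ u v, lam u v =
      (1 - 2 * (τ : ℂ) * (g v : ℂ) * Complex.I) / (1 + 2 * (τ : ℂ) * (f u : ℂ) * Complex.I))
    (ω Q R : ℝ → ℝ → ℝ)
    (Ψ : ℝ → ℝ → Matrix (Fin 2) (Fin 2) ℂ)
    (hΨsmooth : ∀ i j, ContDiffOn ℝ (⊤ : ℕ∞) (fun p : ℝ × ℝ => Ψ p.1 p.2 i j) (I ×ˢ J))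
    (hΨdet : ∀ u ∈ I, ∀ v ∈ J, (Ψ u v).det = 1)
    (hLaxU : ∀ u ∈ I, ∀ v ∈ J,
      mderiv (fun x => Ψ x v) u = Ψ u v * UmatC ω Q H lam u v)
    (hLaxV : ∀ u ∈ I, ∀ v ∈ J,
      mderiv (fun y => Ψ u y) v = Ψ u v * VmatC ω R H lam u v)
    (F N : ℝ → ℝ → Matrix (Fin 2) (Fin 2) ℂ)
    (hF : ∀ u v, F u v = Ψ u v * imat * (Ψ u v)ᴴ)
    (hN : ∀ u v, N u v = -(Ψ u v * jmat * (Ψ u v)ᴴ)) :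
    ∀ u ∈ I, ∀ v ∈ J,
      (F u v).IsHermitian ∧
      (N u v).IsHermitian ∧
      (F u v).det = -1 ∧
      formH (mderiv (fun x => F x v) u) (mderiv (fun x => F x v) u) = 0 ∧
      formH (mderiv (fun y => F u y) v) (mderiv (fun y => F u y) v) = 0 ∧
      2 * formH (mderiv (fun x => F x v) u) (mderiv (fun y => F u y) v)
        = ((4 * τ ^ 2 * Real.exp (ω u v) /
            ((1 + 4 * τ ^ 2 * (f u) ^ 2) * (1 + 4 * τ ^ 2 * (g v) ^ 2)) : ℝ) : ℂ) ∧
      formH (N u v) (N u v) = 1 ∧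
      formH (N u v) (F u v) = 0 ∧
      formH (N u v) (mderiv (fun x => F x v) u) = 0 ∧
      formH (N u v) (mderiv (fun y => F u y) v) = 0 := by
  intro u hu v hv
  have hΨdiff : ∀ i j, DifferentiableAt ℝ (fun p : ℝ × ℝ => Ψ p.1 p.2 i j) (u, v) := fun i j =>
    ((hΨsmooth i j).contDiffAt ((hIopen.prod hJopen).mem_nhds ⟨hu, hv⟩)).differentiableAt
      (by simp)
  have hFu : mderiv (fun x => F x v) u = Ψ u v * !![0, 0; 0,
      ((H u v * Real.exp (ω u v / 2) * (lam u v).im : ℝ) : ℂ)] * (Ψ u v)ᴴ := by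
    simp only [hF]
    rw [mderiv_mul_mul_conjTranspose_of_lax (fun i j => (hΨdiff i j).comp_prodMk_const_right)
      (hLaxU u hu v hv), UmatC_mul_imat_add_imat_mul_conjTranspose]
  have hFv : mderiv (fun y => F u y) v = Ψ u v * !![
      ((H u v * Real.exp (ω u v / 2) * (lam u v)⁻¹.im : ℝ) : ℂ), 0; 0, 0] * (Ψ u v)ᴴ := by
    simp only [hF]
    rw [mderiv_mul_mul_conjTranspose_of_lax (fun i j => (hΨdiff i j).comp_prodMk_const_left)
      (hLaxV u hu v hv), VmatC_mul_imat_add_imat_mul_conjTranspose]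
  have hNΨ : N u v = Ψ u v * -jmat * (Ψ u v)ᴴ := by
    rw [hN]
    noncomm_ring
  have hformH := formH_mul_mul_conjTranspose_of_det_eq_one (hΨdet u hu v hv)
  refine ⟨?_, ?_, ?_, ?_, ?_, ?_, ?_, ?_, ?_, ?_⟩
  · rw [hF]
    exact isHermitian_mul_mul_conjTranspose _ imat_isHermitian
  · rw [hNΨ]
    exact isHermitian_mul_mul_conjTranspose _ jmat_isHermitian.neg
  · simp [hF, hΨdet u hu v hv, imat, det_fin_two_of]
  · rw [hFu, hformH]
    simp [formH_apply]
  · rw [hFv, hformH]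
    simp [formH_apply]
  · rw [hFu, hFv, hformH, hH]
    exact two_mul_formH_diagonal_eq (hfg u hu v hv) (hlam u v) (ω u v)
  · rw [hNΨ, hformH]
    norm_num [formH_apply, jmat]
  · rw [hNΨ, hF, hformH]
    simp [formH_apply, jmat, imat]
  · rw [hNΨ, hFu, hformH]
    norm_num [formH_apply, jmat]
  · rw [hNΨ, hFv, hformH]
    simp [formH_apply, jmat]

/-- immersion formula in the de Sitter space `S³₁`: for a solution `Ψ`
of the Lax pair with spectral parameter `λ = (1 − 2iτg)/(1 + 2iτf)`, the map
`F = Ψi′Ψ*` takes values in `S³₁ = {X Hermitian, det X = −1}`, is conformal with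
`2⟨F_u,F_v⟩ = 4τ²e^ω/((1+4τ²f²)(1+4τ²g²))`, and `N = −Ψj′Ψ*` is a unit normal. -/
theorem statement4
    (I J : Set ℝ)
    (hIopen : IsOpen I) (hIint : I.OrdConnected)
    (hJopen : IsOpen J) (hJint : J.OrdConnected)
    (f g : ℝ → ℝ)
    (hf : ContDiffOn ℝ (⊤ : ℕ∞) f I) (hg : ContDiffOn ℝ (⊤ : ℕ∞) g J)
    (hfg : ∀ u ∈ I, ∀ v ∈ J, f u + g v ≠ 0)
    (τ : ℝ) (hτ : τ ≠ 0)
    (H : ℝ → ℝ → ℝ) (hH : ∀ u v, H u v = 1 / (f u + g v))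
    (lam : ℝ → ℝ → ℂ)
    (hlam : ∀ u v, lam u v =
      (1 - 2 * (τ : ℂ) * (g v : ℂ) * Complex.I) / (1 + 2 * (τ : ℂ) * (f u : ℂ) * Complex.I))
    (ω Q R : ℝ → ℝ → ℝ)
    (hω : Smooth2 ω (I ×ˢ J)) (hQ : Smooth2 Q (I ×ˢ J)) (hR : Smooth2 R (I ×ˢ J))
    (hGauss : ∀ u ∈ I, ∀ v ∈ J, GaussEq 0 ω Q R H u v)
    (hCodazzi : ∀ u ∈ I, ∀ v ∈ J, CodazziEq ω Q R H u v)
    (Ψ : ℝ → ℝ → Matrix (Fin 2) (Fin 2) ℂ)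
    (hΨsmooth : ∀ i j, ContDiffOn ℝ (⊤ : ℕ∞) (fun p : ℝ × ℝ => Ψ p.1 p.2 i j) (I ×ˢ J))
    (hΨdet : ∀ u ∈ I, ∀ v ∈ J, (Ψ u v).det = 1)
    (hLaxU : ∀ u ∈ I, ∀ v ∈ J,
      mderiv (fun x => Ψ x v) u = Ψ u v * UmatC ω Q H lam u v)
    (hLaxV : ∀ u ∈ I, ∀ v ∈ J,
      mderiv (fun y => Ψ u y) v = Ψ u v * VmatC ω R H lam u v)
    (F N : ℝ → ℝ → Matrix (Fin 2) (Fin 2) ℂ)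
    (hF : ∀ u v, F u v = Ψ u v * imat * (Ψ u v)ᴴ)
    (hN : ∀ u v, N u v = -(Ψ u v * jmat * (Ψ u v)ᴴ)) :
    ∀ u ∈ I, ∀ v ∈ J,
      (F u v).IsHermitian ∧
      (N u v).IsHermitian ∧
      (F u v).det = -1 ∧
      formH (mderiv (fun x => F x v) u) (mderiv (fun x => F x v) u) = 0 ∧
      formH (mderiv (fun y => F u y) v) (mderiv (fun y => F u y) v) = 0 ∧
      2 * formH (mderiv (fun x => F x v) u) (mderiv (fun y => F u y) v)
        = ((4 * τ ^ 2 * Real.exp (ω u v) /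
            ((1 + 4 * τ ^ 2 * (f u) ^ 2) * (1 + 4 * τ ^ 2 * (g v) ^ 2)) : ℝ) : ℂ) ∧
      formH (N u v) (N u v) = 1 ∧
      formH (N u v) (F u v) = 0 ∧
      formH (N u v) (mderiv (fun x => F x v) u) = 0 ∧
      formH (N u v) (mderiv (fun y => F u y) v) = 0 :=
  statement4_general I J hIopen hJopen f g hfg τ H hH lam hlam ω Q R Ψ hΨsmooth hΨdet hLaxU hLaxV F
    N hF hN
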